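/- Let f be an increasing convex function on an interval J, A₁, …, A_ℓ be Hermitian n×n matrices with spectra in J, and p₁, …, p_ℓ ∈ [0,1] with ∑_i p_i = 1. Then for each 1 ≤ j ≤ n, λ_j(f(∑_i p_i A_i)) ≤ λ_j(∑_i p_i f(A_i)). -/

import Mathlib

/-!
Write `M = ∑ pᵢ Aᵢ` and `N = ∑ pᵢ f(Aᵢ)`. In an orthonormal eigenbasis `(vₖ)` of a Hermitian `A`,
the numbers `⟪x, A x⟫` and `⟪x, f(A) x⟫` at a unit vector `x` are averages of the eigenvalues
`λₖ` and of the `f(λₖ)` with the same weights `‖⟪vₖ, x⟫‖²`, so scalar Jensen gives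
`f ⟪x, Aᵢ x⟫ ≤ ⟪x, f(Aᵢ) x⟫`, and a second application across `i` gives `f ⟪x, M x⟫ ≤ ⟪x, N x⟫`.
A dimension count (`(j + 1) + (n - j) > n`) yields a unit `x` in both the span of the top `j + 1`
eigenvectors of `M` and the span of the bottom `n - j` eigenvectors of `N`, whence
`λⱼ(M) ≤ ⟪x, M x⟫` and `⟪x, N x⟫ ≤ λⱼ(N)`. The same count, run for `f(M)` in the eigenbasis of
`M`, gives `λⱼ(f(M)) ≤ f(λⱼ(M))`; monotonicity of `f` closes the chain.
-/

open Matrix ComplexOrder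

noncomputable def matFun {n : ℕ} (f : ℝ → ℝ) (A : Matrix (Fin n) (Fin n) ℂ) :
    Matrix (Fin n) (Fin n) ℂ :=
  if hA : A.IsHermitian then
    (hA.eigenvectorUnitary : Matrix (Fin n) (Fin n) ℂ) *
      Matrix.diagonal (fun i => (f (hA.eigenvalues i) : ℂ)) *
      (hA.eigenvectorUnitary : Matrix (Fin n) (Fin n) ℂ)ᴴ
  else 0

/-- `lam A j` : the `j`-th largest eigenvalue (0-indexed) of a Hermitian matrix `A`. -/
noncomputable def lam {n : ℕ} (A : Matrix (Fin n) (Fin n) ℂ) (j : ℕ) : ℝ :=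
  if hA : A.IsHermitian then
    if h : j < n then (hA.eigenvalues ∘ Tuple.sort hA.eigenvalues) ((⟨j, h⟩ : Fin n).rev)
    else 0
  else 0

/-- Loewner order. -/
def loewnerLE {n : ℕ} (A B : Matrix (Fin n) (Fin n) ℂ) : Prop := (B - A).PosSemidef

/-- `|B| = (B^* B)^{1/2}`. -/
noncomputable def matAbs {n : ℕ} (B : Matrix (Fin n) (Fin n) ℂ) : Matrix (Fin n) (Fin n) ℂ :=
  ((Matrix.posSemidef_conjTranspose_mul_self B).1.eigenvectorUnitary : Matrix (Fin n) (Fin n) ℂ) *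
    Matrix.diagonal ((↑) ∘ (√·) ∘ (Matrix.posSemidef_conjTranspose_mul_self B).1.eigenvalues) *
    (star (Matrix.posSemidef_conjTranspose_mul_self B).1.eigenvectorUnitary : Matrix (Fin n) (Fin n) ℂ)

/-- `|B|^r` via functional calculus. -/
noncomputable def matAbsPow {n : ℕ} (B : Matrix (Fin n) (Fin n) ℂ) (r : ℝ) :
    Matrix (Fin n) (Fin n) ℂ :=
  matFun (fun t => t ^ r) (matAbs B)

open Module Submodule
open scoped InnerProductSpace

theorem Submodule.exists_norm_eq_one_mem_inf {𝕜 E : Type*} [RCLike 𝕜] [NormedAddCommGroup E]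
    [InnerProductSpace 𝕜 E] [FiniteDimensional 𝕜 E] {S T : Submodule 𝕜 E}
    (h : finrank 𝕜 E < finrank 𝕜 S + finrank 𝕜 T) : ∃ x ∈ S ⊓ T, ‖x‖ = 1 := by
  obtain ⟨x, hx, hx0⟩ := (S ⊓ T).ne_bot_iff.mp fun hbot =>
    h.not_ge (finrank_add_finrank_le_of_disjoint (disjoint_iff.mpr hbot))
  exact ⟨(‖x‖⁻¹ : 𝕜) • x, smul_mem _ _ hx, norm_smul_inv_norm hx0⟩

namespace OrthonormalBasis

variable {𝕜 E ι : Type*} [RCLike 𝕜] [NormedAddCommGroup E] [InnerProductSpace 𝕜 E] [Fintype ι]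
  (b : OrthonormalBasis ι 𝕜 E) {T : E →ₗ[𝕜] E} {d : ι → ℝ}

theorem re_inner_map_self_eq_sum (hT : ∀ k, T (b k) = (d k : 𝕜) • b k) (x : E) :
    RCLike.re ⟪x, T x⟫_𝕜 = ∑ k, ‖⟪b k, x⟫_𝕜‖ ^ 2 * d k := by
  have hTx : T x = ∑ k, (⟪b k, x⟫_𝕜 * d k) • b k := by
    conv_lhs => rw [← b.sum_repr' x]
    simp only [map_sum, map_smul, hT, smul_smul]
  rw [hTx, inner_sum, map_sum]
  refine Finset.sum_congr rfl fun k _ => ?_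
  rw [inner_smul_right, ← inner_conj_symm, mul_comm, ← mul_assoc, RCLike.mul_conj,
    RCLike.norm_conj, ← RCLike.ofReal_pow, ← RCLike.ofReal_mul, RCLike.ofReal_re]

theorem inner_eq_zero_of_mem_span_image {K : Set ι} {k : ι} (hk : k ∉ K) {x : E}
    (hx : x ∈ span 𝕜 (b '' K)) : ⟪b k, x⟫_𝕜 = 0 := by
  refine (isOrtho_span.mpr ?_).inner_eq (subset_span rfl) hx
  rintro _ rfl _ ⟨l, hl, rfl⟩
  exact b.orthonormal.inner_eq_zero (ne_of_mem_of_not_mem hl hk).symm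

theorem mul_sq_norm_le_re_inner_map_self (hT : ∀ k, T (b k) = (d k : 𝕜) • b k)
    {K : Finset ι} {c : ℝ} (hc : ∀ k ∈ K, c ≤ d k) {x : E} (hx : x ∈ span 𝕜 (b '' K)) :
    c * ‖x‖ ^ 2 ≤ RCLike.re ⟪x, T x⟫_𝕜 := by
  rw [b.re_inner_map_self_eq_sum hT, ← b.sum_sq_norm_inner_right, Finset.mul_sum]
  refine Finset.sum_le_sum fun k _ => ?_
  by_cases hk : k ∈ K
  · rw [mul_comm]
    exact mul_le_mul_of_nonneg_left (hc k hk) (sq_nonneg _)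
  · simp [b.inner_eq_zero_of_mem_span_image (Finset.mem_coe.not.mpr hk) hx]

theorem re_inner_map_self_le_mul_sq_norm (hT : ∀ k, T (b k) = (d k : 𝕜) • b k)
    {K : Finset ι} {c : ℝ} (hc : ∀ k ∈ K, d k ≤ c) {x : E} (hx : x ∈ span 𝕜 (b '' K)) :
    RCLike.re ⟪x, T x⟫_𝕜 ≤ c * ‖x‖ ^ 2 := by
  have hT' : ∀ k, (-T) (b k) = ((-d k : ℝ) : 𝕜) • b k := by simp [hT]
  have := b.mul_sq_norm_le_re_inner_map_self hT' (c := -c) (by simpa using hc) hx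
  simpa [inner_neg_right] using this

theorem finrank_span_image (K : Finset ι) : finrank 𝕜 (span 𝕜 (b '' K)) = K.card := by
  rw [Set.image_eq_range, finrank_span_eq_card (b := fun k : (K : Set ι) => b k)
    (b.orthonormal.linearIndependent.comp _ Subtype.val_injective)]
  simp

theorem exists_norm_eq_one_le_re_inner_and_re_inner_le (b' : OrthonormalBasis ι 𝕜 E)
    {T' : E →ₗ[𝕜] E} {d' : ι → ℝ} (hT : ∀ k, T (b k) = (d k : 𝕜) • b k)
    (hT' : ∀ k, T' (b' k) = (d' k : 𝕜) • b' k) {K K' : Finset ι}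
    (hKK' : Fintype.card ι < K.card + K'.card) {c c' : ℝ} (hc : ∀ k ∈ K, c ≤ d k)
    (hc' : ∀ k ∈ K', d' k ≤ c') :
    ∃ x : E, ‖x‖ = 1 ∧ c ≤ RCLike.re ⟪x, T x⟫_𝕜 ∧ RCLike.re ⟪x, T' x⟫_𝕜 ≤ c' := by
  have := b.toBasis.finiteDimensional_of_finite
  obtain ⟨x, hx, hx1⟩ := exists_norm_eq_one_mem_inf (S := span 𝕜 (b '' K))
    (T := span 𝕜 (b' '' K'))
    (by rwa [b.finrank_span_image, b'.finrank_span_image, finrank_eq_card_basis b.toBasis])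
  refine ⟨x, hx1, ?_, ?_⟩
  · simpa [hx1] using b.mul_sq_norm_le_re_inner_map_self hT hc (mem_inf.mp hx).1
  · simpa [hx1] using b'.re_inner_map_self_le_mul_sq_norm hT' hc' (mem_inf.mp hx).2

theorem re_inner_map_self_mem {J : Set ℝ} (hJ : Convex ℝ J) (hT : ∀ k, T (b k) = (d k : 𝕜) • b k)
    (hd : ∀ k, d k ∈ J) {x : E} (hx : ‖x‖ = 1) : RCLike.re ⟪x, T x⟫_𝕜 ∈ J := by
  rw [b.re_inner_map_self_eq_sum hT]
  exact hJ.sum_mem (fun k _ => sq_nonneg _) (by rw [b.sum_sq_norm_inner_right, hx, one_pow])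
    fun k _ => hd k

theorem map_re_inner_map_self_le {J : Set ℝ} {f : ℝ → ℝ} (hf : ConvexOn ℝ J f)
    {S : E →ₗ[𝕜] E} (hT : ∀ k, T (b k) = (d k : 𝕜) • b k)
    (hS : ∀ k, S (b k) = (f (d k) : 𝕜) • b k) (hd : ∀ k, d k ∈ J) {x : E} (hx : ‖x‖ = 1) :
    f (RCLike.re ⟪x, T x⟫_𝕜) ≤ RCLike.re ⟪x, S x⟫_𝕜 := by
  rw [b.re_inner_map_self_eq_sum hT, b.re_inner_map_self_eq_sum hS]
  exact hf.map_sum_le (fun k _ => sq_nonneg _) (by rw [b.sum_sq_norm_inner_right, hx, one_pow])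
    fun k _ => hd k

end OrthonormalBasis

namespace Matrix

section Hermitian

variable {𝕜 ι : Type*} [RCLike 𝕜]

theorem isHermitian_sum_ofReal_smul {κ : Type*} [Fintype κ] (p : κ → ℝ) {B : κ → Matrix ι ι 𝕜}
    (hB : ∀ i, (B i).IsHermitian) : (∑ i, (p i : 𝕜) • B i).IsHermitian :=
  isSelfAdjoint_sum _ fun i _ => IsSelfAdjoint.smul (RCLike.conj_ofReal (p i)) (hB i)

variable [Fintype ι] [DecidableEq ι]

theorem IsHermitian.toEuclideanLin_eigenvectorBasis {A : Matrix ι ι 𝕜} (hA : A.IsHermitian)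
    (k : ι) :
    toEuclideanLin A (hA.eigenvectorBasis k) = (hA.eigenvalues k : 𝕜) • hA.eigenvectorBasis k := by
  rw [toLpLin_apply, hA.mulVec_eigenvectorBasis, WithLp.toLp_smul, WithLp.toLp_ofLp,
    RCLike.real_smul_eq_coe_smul (K := 𝕜)]

theorem re_inner_toEuclideanLin_sum_ofReal_smul {κ : Type*} [Fintype κ] (p : κ → ℝ)
    (B : κ → Matrix ι ι 𝕜) (x : EuclideanSpace 𝕜 ι) :
    RCLike.re ⟪x, toEuclideanLin (∑ i, (p i : 𝕜) • B i) x⟫_𝕜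
      = ∑ i, p i * RCLike.re ⟪x, toEuclideanLin (B i) x⟫_𝕜 := by
  simp only [map_sum, map_smul, LinearMap.sum_apply, LinearMap.smul_apply,
    inner_sum, inner_smul_right, RCLike.re_ofReal_mul]

theorem IsHermitian.eigenvalues_eq_re_inner {A : Matrix ι ι 𝕜} (hA : A.IsHermitian) (k : ι) :
    hA.eigenvalues k
      = RCLike.re ⟪hA.eigenvectorBasis k, toEuclideanLin A (hA.eigenvectorBasis k)⟫_𝕜 := by
  rw [hA.toEuclideanLin_eigenvectorBasis, inner_smul_right, inner_self_eq_norm_sq_to_K,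
    hA.eigenvectorBasis.orthonormal.1 k]
  simp

theorem re_inner_toEuclideanLin_sum_ofReal_smul_mem {J : Set ℝ} (hJ : Convex ℝ J) {κ : Type*}
    [Fintype κ] {A : κ → Matrix ι ι 𝕜} (hA : ∀ i, (A i).IsHermitian)
    (hspec : ∀ i k, (hA i).eigenvalues k ∈ J) {p : κ → ℝ} (hp0 : ∀ i, 0 ≤ p i)
    (hps : ∑ i, p i = 1) {x : EuclideanSpace 𝕜 ι} (hx : ‖x‖ = 1) :
    RCLike.re ⟪x, toEuclideanLin (∑ i, (p i : 𝕜) • A i) x⟫_𝕜 ∈ J := by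
  rw [re_inner_toEuclideanLin_sum_ofReal_smul]
  exact hJ.sum_mem (fun i _ => hp0 i) hps fun i _ => (hA i).eigenvectorBasis.re_inner_map_self_mem
    hJ (hA i).toEuclideanLin_eigenvectorBasis (hspec i) hx

end Hermitian

section FunctionalCalculus

variable {n : ℕ} {A : Matrix (Fin n) (Fin n) ℂ}

theorem IsHermitian.matFun_eq_cfc (hA : A.IsHermitian) (f : ℝ → ℝ) : matFun f A = cfc f A := by
  rw [matFun, dif_pos hA, hA.cfc_eq, IsHermitian.cfc, Unitary.conjStarAlgAut_apply]
  rfl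

theorem IsHermitian.isHermitian_matFun (hA : A.IsHermitian) (f : ℝ → ℝ) :
    (matFun f A).IsHermitian :=
  hA.matFun_eq_cfc f ▸ cfc_predicate f A

theorem IsHermitian.toEuclideanLin_matFun_eigenvectorBasis (hA : A.IsHermitian) (f : ℝ → ℝ)
    (k : Fin n) :
    toEuclideanLin (matFun f A) (hA.eigenvectorBasis k)
      = (f (hA.eigenvalues k) : ℂ) • hA.eigenvectorBasis k := by
  rw [matFun, dif_pos hA, toLpLin_apply, ← mulVec_mulVec, ← mulVec_mulVec, ← star_eq_conjTranspose,
    star_eigenvectorUnitary_mulVec, diagonal_mulVec_single, mul_one]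
  ext i
  simp [mulVec_single, mul_comm]

theorem IsHermitian.lam_eq (hA : A.IsHermitian) {j : ℕ} (hj : j < n) :
    lam A j = hA.eigenvalues (Tuple.sort hA.eigenvalues (⟨j, hj⟩ : Fin n).rev) := by
  rw [lam, dif_pos hA, dif_pos hj]
  rfl

theorem IsHermitian.exists_card_eq_lam_le (hA : A.IsHermitian) {j : ℕ} (hj : j < n) :
    ∃ K : Finset (Fin n), K.card = j + 1 ∧ ∀ k ∈ K, lam A j ≤ hA.eigenvalues k := by
  refine ⟨(Finset.Ici (⟨j, hj⟩ : Fin n).rev).map (Tuple.sort hA.eigenvalues).toEmbedding, ?_, ?_⟩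
  · rw [Finset.card_map, Fin.card_Ici, Fin.val_rev, Fin.val_mk]
    omega
  · simp only [Finset.mem_map, Equiv.coe_toEmbedding]
    rintro _ ⟨i, hi, rfl⟩
    rw [hA.lam_eq hj]
    exact Tuple.monotone_sort hA.eigenvalues (Finset.mem_Ici.mp hi)

theorem IsHermitian.exists_card_eq_le_lam (hA : A.IsHermitian) {j : ℕ} (hj : j < n) :
    ∃ K : Finset (Fin n), K.card = n - j ∧ ∀ k ∈ K, hA.eigenvalues k ≤ lam A j := by
  refine ⟨(Finset.Iic (⟨j, hj⟩ : Fin n).rev).map (Tuple.sort hA.eigenvalues).toEmbedding, ?_, ?_⟩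
  · rw [Finset.card_map, Fin.card_Iic, Fin.val_rev, Fin.val_mk]
    omega
  · simp only [Finset.mem_map, Equiv.coe_toEmbedding]
    rintro _ ⟨i, hi, rfl⟩
    rw [hA.lam_eq hj]
    exact Tuple.monotone_sort hA.eigenvalues (Finset.mem_Iic.mp hi)

theorem IsHermitian.exists_norm_eq_one_lam_le_and_le (hA : A.IsHermitian)
    {B : Matrix (Fin n) (Fin n) ℂ} (b : OrthonormalBasis (Fin n) ℂ (EuclideanSpace ℂ (Fin n)))
    {d : Fin n → ℝ} (hB : ∀ k, toEuclideanLin B (b k) = (d k : ℂ) • b k) {j : ℕ} (hj : j < n)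
    {K : Finset (Fin n)} (hK : K.card = n - j) {c : ℝ} (hc : ∀ k ∈ K, d k ≤ c) :
    ∃ x : EuclideanSpace ℂ (Fin n), ‖x‖ = 1 ∧ lam A j ≤ RCLike.re ⟪x, toEuclideanLin A x⟫_ℂ ∧
      RCLike.re ⟪x, toEuclideanLin B x⟫_ℂ ≤ c := by
  obtain ⟨K₀, hK₀, hle⟩ := hA.exists_card_eq_lam_le hj
  exact hA.eigenvectorBasis.exists_norm_eq_one_le_re_inner_and_re_inner_le b
    hA.toEuclideanLin_eigenvectorBasis hB (by rw [hK₀, hK, Fintype.card_fin]; omega) hle hc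

theorem IsHermitian.lam_matFun_le (hA : A.IsHermitian) {J : Set ℝ} {f : ℝ → ℝ}
    (hf : MonotoneOn f J) (hspec : ∀ k, hA.eigenvalues k ∈ J) {j : ℕ} (hj : j < n) :
    lam (matFun f A) j ≤ f (lam A j) := by
  have hlam : lam A j ∈ J := hA.lam_eq hj ▸ hspec _
  obtain ⟨K, hK, hle⟩ := hA.exists_card_eq_le_lam hj
  obtain ⟨x, -, hlow, hup⟩ := (hA.isHermitian_matFun f).exists_norm_eq_one_lam_le_and_le
    hA.eigenvectorBasis (hA.toEuclideanLin_matFun_eigenvectorBasis f) hj hK (c := f (lam A j))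
    fun k hk => hf (hspec k) hlam (hle k hk)
  exact hlow.trans hup

theorem _root_.ConvexOn.map_re_inner_toEuclideanLin_sum_ofReal_smul_le {J : Set ℝ} {f : ℝ → ℝ}
    (hf : ConvexOn ℝ J f) {κ : Type*} [Fintype κ] {A : κ → Matrix (Fin n) (Fin n) ℂ}
    (hA : ∀ i, (A i).IsHermitian) (hspec : ∀ i k, (hA i).eigenvalues k ∈ J) {p : κ → ℝ}
    (hp0 : ∀ i, 0 ≤ p i) (hps : ∑ i, p i = 1) {x : EuclideanSpace ℂ (Fin n)} (hx : ‖x‖ = 1) :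
    f (RCLike.re ⟪x, toEuclideanLin (∑ i, (p i : ℂ) • A i) x⟫_ℂ)
      ≤ RCLike.re ⟪x, toEuclideanLin (∑ i, (p i : ℂ) • matFun f (A i)) x⟫_ℂ := by
  have hmem i := (hA i).eigenvectorBasis.re_inner_map_self_mem hf.1
    (hA i).toEuclideanLin_eigenvectorBasis (hspec i) hx
  calc _ = f (∑ i, p i * RCLike.re ⟪x, toEuclideanLin (A i) x⟫_ℂ) :=
        congrArg f (re_inner_toEuclideanLin_sum_ofReal_smul p A x)
    _ ≤ ∑ i, p i * f (RCLike.re ⟪x, toEuclideanLin (A i) x⟫_ℂ) :=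
        hf.map_sum_le (fun i _ => hp0 i) hps fun i _ => hmem i
    _ ≤ _ := Finset.sum_le_sum fun i _ => mul_le_mul_of_nonneg_left
        ((hA i).eigenvectorBasis.map_re_inner_map_self_le hf (hA i).toEuclideanLin_eigenvectorBasis
          ((hA i).toEuclideanLin_matFun_eigenvectorBasis f) (hspec i) hx) (hp0 i)
    _ = _ := (re_inner_toEuclideanLin_sum_ofReal_smul p _ x).symm

end FunctionalCalculus

end Matrix

theorem eigenvalue_jensen_increasing_convex_general {n ℓ : ℕ}
    (J : Set ℝ) (f : ℝ → ℝ) (hf : ConvexOn ℝ J f) (hmono : MonotoneOn f J)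
    (A : Fin ℓ → Matrix (Fin n) (Fin n) ℂ) (hA : ∀ i, (A i).IsHermitian)
    (hspec : ∀ i, ∀ j, (hA i).eigenvalues j ∈ J)
    (p : Fin ℓ → ℝ) (hp0 : ∀ i, 0 ≤ p i) (hps : ∑ i, p i = 1)
    (j : ℕ) (hj : j < n) :
    lam (matFun f (∑ i, (p i : ℂ) • A i)) j ≤ lam (∑ i, (p i : ℂ) • matFun f (A i)) j := by
  have hM := isHermitian_sum_ofReal_smul p hA
  have hN := isHermitian_sum_ofReal_smul p fun i => (hA i).isHermitian_matFun f
  have hqJ {x} := re_inner_toEuclideanLin_sum_ofReal_smul_mem hf.1 hA hspec hp0 hps (x := x)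
  have hspecM : ∀ k, hM.eigenvalues k ∈ J := fun k =>
    hM.eigenvalues_eq_re_inner k ▸ hqJ (hM.eigenvectorBasis.orthonormal.1 k)
  obtain ⟨K, hK, hle⟩ := hN.exists_card_eq_le_lam hj
  obtain ⟨x, hx, hMx, hNx⟩ := hM.exists_norm_eq_one_lam_le_and_le hN.eigenvectorBasis
    hN.toEuclideanLin_eigenvectorBasis hj hK hle
  calc lam (matFun f _) j ≤ f (lam _ j) := hM.lam_matFun_le hmono hspecM hj
    _ ≤ f (RCLike.re ⟪x, toEuclideanLin _ x⟫_ℂ) := hmono (hM.lam_eq hj ▸ hspecM _) (hqJ hx) hMx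
    _ ≤ _ := hf.map_re_inner_toEuclideanLin_sum_ofReal_smul_le hA hspec hp0 hps hx
    _ ≤ _ := hNx

/-- **Aujla–Silva lemma.** If `f` is increasing and convex on an interval `J`
(the convex subsets of `ℝ` are exactly the intervals), `Aᵢ` Hermitian with spectra
in `J` and `pᵢ ∈ [0,1]`, `∑ pᵢ = 1`, then `λⱼ(f(∑ pᵢAᵢ)) ≤ λⱼ(∑ pᵢ f(Aᵢ))`
for each `j`. -/
theorem eigenvalue_jensen_increasing_convex {n ℓ : ℕ}
    (J : Set ℝ) (f : ℝ → ℝ) (hf : ConvexOn ℝ J f) (hmono : MonotoneOn f J)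
    (A : Fin ℓ → Matrix (Fin n) (Fin n) ℂ) (hA : ∀ i, (A i).IsHermitian)
    (hspec : ∀ i, ∀ j, (hA i).eigenvalues j ∈ J)
    (p : Fin ℓ → ℝ) (hp0 : ∀ i, 0 ≤ p i) (hp1 : ∀ i, p i ≤ 1) (hps : ∑ i, p i = 1)
    (j : ℕ) (hj : j < n) :
    lam (matFun f (∑ i, (p i : ℂ) • A i)) j ≤ lam (∑ i, (p i : ℂ) • matFun f (A i)) j :=
  eigenvalue_jensen_increasing_convex_general J f hf hmono A hA hspec p hp0 hps j hj
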